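/- arXiv:nlin/0605043 — 4 statements merged into one kernel-verified Lean document; each statement's English description precedes it below -/
import Mathlib

section
/- For c = 36/169, the function φ(z) = (105/338)·sech⁴(z/(2√13)) is a one-pulse solution of the traveling-wave equation: φ is infinitely differentiable, even (φ(−z) = φ(z) for all z), tends to 0 as |z| → ∞, and satisfies φ⁗(z) − φ″(z) + c·φ(z) = φ(z)² for all z ∈ ℝ. -/
open Real Filter

noncomputable section OnePulseAux

private def bb : ℝ := 1 / (2 * Real.sqrt 13)

private def ch (z : ℝ) : ℝ := Real.cosh (z / (2 * Real.sqrt 13))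
private def sh (z : ℝ) : ℝ := Real.sinh (z / (2 * Real.sqrt 13))

private def aa : ℝ := 105 / 338

private def f0 (z : ℝ) : ℝ := aa / ch z ^ 4
private def f1 (z : ℝ) : ℝ := (-4 * aa * bb) * sh z / ch z ^ 5
private def f2 (z : ℝ) : ℝ := (aa * bb ^ 2) * (16 * ch z ^ 2 - 20) / ch z ^ 6
private def f3 (z : ℝ) : ℝ := (aa * bb ^ 3) * (sh z * (120 - 64 * ch z ^ 2)) / ch z ^ 7
private def f4 (z : ℝ) : ℝ :=
  (aa * bb ^ 4) * (256 * ch z ^ 4 - 1040 * ch z ^ 2 + 840) / ch z ^ 8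

private lemma ch_pos (z : ℝ) : 0 < ch z := Real.cosh_pos _
private lemma ch_ne (z : ℝ) : ch z ≠ 0 := (ch_pos z).ne'

private lemma hsq (z : ℝ) : ch z ^ 2 = sh z ^ 2 + 1 := Real.cosh_sq _

private lemma h_inner (z : ℝ) :
    HasDerivAt (fun z : ℝ => z / (2 * Real.sqrt 13)) bb z := by
  simpa [bb, div_eq_mul_inv] using (hasDerivAt_id z).div_const (2 * Real.sqrt 13)

private lemma hch (z : ℝ) : HasDerivAt ch (sh z * bb) z :=
  (Real.hasDerivAt_cosh _).comp z (h_inner z)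

private lemma hsh (z : ℝ) : HasDerivAt sh (ch z * bb) z :=
  (Real.hasDerivAt_sinh _).comp z (h_inner z)

private lemma hb2 : bb ^ 2 = 1 / 52 := by
  have h13 : Real.sqrt 13 ^ 2 = 13 := Real.sq_sqrt (by norm_num)
  simp only [bb]
  rw [div_pow, mul_pow, h13]
  norm_num

private lemma hd0 (z : ℝ) : HasDerivAt f0 (f1 z) z := by
  have h := (hasDerivAt_const z aa).div ((hch z).pow 4) (pow_ne_zero 4 (ch_ne z))
  refine h.congr_deriv ?_
  have := ch_ne z
  simp only [f1, Pi.div_apply, Pi.pow_apply, Pi.mul_apply]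
  field_simp
  ring

private lemma hd1 (z : ℝ) : HasDerivAt f1 (f2 z) z := by
  have h := (((hsh z).const_mul (-4 * aa * bb)).div ((hch z).pow 5)
      (pow_ne_zero 5 (ch_ne z)))
  refine h.congr_deriv ?_
  have := ch_ne z
  simp only [f2, Pi.div_apply, Pi.pow_apply, Pi.mul_apply]
  field_simp
  linear_combination (-20 * aa * bb ^ 2 * ch z ^ 4) * hsq z

private lemma hd2 (z : ℝ) : HasDerivAt f2 (f3 z) z := by
  have hnum : HasDerivAt (fun z => (aa * bb ^ 2) * (16 * ch z ^ 2 - 20))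
      ((aa * bb ^ 2) * (32 * ch z * (sh z * bb))) z := by
    have := (((hch z).pow 2).const_mul (16 : ℝ)).sub_const 20
    exact (this.const_mul (aa * bb ^ 2)).congr_deriv (by ring)
  have h := hnum.div ((hch z).pow 6) (pow_ne_zero 6 (ch_ne z))
  refine h.congr_deriv ?_
  have := ch_ne z
  simp only [f3, Pi.div_apply, Pi.pow_apply, Pi.mul_apply]
  field_simp
  ring

private lemma hd3 (z : ℝ) : HasDerivAt f3 (f4 z) z := by
  have hnum : HasDerivAt (fun z => (aa * bb ^ 3) * (sh z * (120 - 64 * ch z ^ 2)))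
      ((aa * bb ^ 3) * ((ch z * bb) * (120 - 64 * ch z ^ 2)
        + sh z * (-(64 * (2 * ch z * (sh z * bb)))))) z := by
    have h2 : HasDerivAt (fun z => (120 : ℝ) - 64 * ch z ^ 2)
        (-(64 * (2 * ch z * (sh z * bb)))) z := by
      have := ((hch z).pow 2).const_mul (64 : ℝ)
      exact (this.const_sub (120:ℝ)).congr_deriv (by ring)
    exact (((hsh z).mul h2).const_mul (aa * bb ^ 3))
  have h := hnum.div ((hch z).pow 7) (pow_ne_zero 7 (ch_ne z))
  refine h.congr_deriv ?_
  have := ch_ne z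
  simp only [f4, Pi.div_apply, Pi.pow_apply, Pi.mul_apply]
  field_simp
  linear_combination (aa * bb ^ 4 * (840 * ch z ^ 6 - 320 * ch z ^ 8)) * hsq z

end OnePulseAux

/-- For `c = 36/169`, `φ(z) = (105/338) * sech⁴(z/(2√13))` is a one-pulse solution of
the fifth-order KdV traveling-wave equation `φ⁗ - φ″ + c·φ = φ²`. -/
theorem one_pulse_exact_solution :
    let c : ℝ := 36 / 169
    let φ : ℝ → ℝ := fun z => (105 / 338) * (1 / Real.cosh (z / (2 * Real.sqrt 13))) ^ 4
    ContDiff ℝ (⊤ : ℕ∞) φ ∧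
    (∀ z : ℝ, φ (-z) = φ z) ∧
    Tendsto φ (cocompact ℝ) (nhds 0) ∧
    (∀ z : ℝ,
      iteratedDeriv 4 φ z - iteratedDeriv 2 φ z + c * φ z = (φ z) ^ 2) := by
  intro c φ
  have hφ : φ = f0 := by
    funext z
    simp only [φ, f0, aa, ch, div_pow, one_pow, mul_one_div]
  have hcontinner : ContDiff ℝ (⊤ : ℕ∞) (fun z : ℝ => Real.cosh (z / (2 * Real.sqrt 13))) :=
    Real.contDiff_cosh.comp (contDiff_id.div_const _)
  refine ⟨?_, ?_, ?_, ?_⟩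
  · exact contDiff_const.mul
      (((contDiff_const.div hcontinner fun z => (Real.cosh_pos _).ne')).pow 4)
  · intro z
    simp [φ, neg_div, Real.cosh_neg]
  · have hcosh_top : Tendsto Real.cosh atTop atTop := by
      apply tendsto_atTop_mono (fun x => ?_)
        ((Real.tendsto_exp_atTop).atTop_div_const (by norm_num : (0:ℝ) < 2))
      rw [Real.cosh_eq]
      have := Real.exp_pos (-x)
      linarith
    have hcosh_bot : Tendsto Real.cosh atBot atTop := by
      have h := hcosh_top.comp tendsto_neg_atBot_atTop
      have he : Real.cosh ∘ Neg.neg = Real.cosh := funext fun x => Real.cosh_neg x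
      rwa [he] at h
    have hpos : (0:ℝ) < 2 * Real.sqrt 13 := by positivity
    have hin_top : Tendsto (fun z : ℝ => z / (2 * Real.sqrt 13)) atTop atTop :=
      tendsto_id.atTop_div_const hpos
    have hin_bot : Tendsto (fun z : ℝ => z / (2 * Real.sqrt 13)) atBot atBot :=
      tendsto_id.atBot_div_const hpos
    have key : Tendsto (fun z : ℝ => Real.cosh (z / (2 * Real.sqrt 13)))
        (cocompact ℝ) atTop := by
      rw [cocompact_eq_atBot_atTop]
      exact tendsto_sup.2 ⟨hcosh_bot.comp hin_bot, hcosh_top.comp hin_top⟩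
    have hinv : Tendsto (fun z : ℝ => 1 / Real.cosh (z / (2 * Real.sqrt 13)))
        (cocompact ℝ) (nhds 0) := by
      simpa [one_div, Pi.inv_def] using key.inv_tendsto_atTop
    have h4 := ((hinv.pow 4).const_mul (105 / 338 : ℝ))
    show Tendsto (fun z : ℝ =>
      (105 / 338 : ℝ) * (1 / Real.cosh (z / (2 * Real.sqrt 13))) ^ 4) (cocompact ℝ) (nhds 0)
    simpa using h4
  · intro z
    have e0 : deriv φ = f1 := by rw [hφ]; exact funext fun z => (hd0 z).deriv
    have e1 : deriv f1 = f2 := funext fun z => (hd1 z).deriv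
    have e2 : deriv f2 = f3 := funext fun z => (hd2 z).deriv
    have e3 : deriv f3 = f4 := funext fun z => (hd3 z).deriv
    have i2 : iteratedDeriv 2 φ = f2 := by
      rw [show (2:ℕ) = 1 + 1 from rfl, iteratedDeriv_succ, iteratedDeriv_one, e0, e1]
    have i4 : iteratedDeriv 4 φ = f4 := by
      rw [show (4:ℕ) = 3 + 1 from rfl, iteratedDeriv_succ,
        show (3:ℕ) = 2 + 1 from rfl, iteratedDeriv_succ, i2, e2, e3]
    rw [i2, i4, hφ]
    have hb4 : bb ^ 4 = 1 / 2704 := by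
      rw [show (4:ℕ) = 2 * 2 from rfl, pow_mul, hb2]; norm_num
    have hc := ch_ne z
    simp only [f0, f2, f4, aa, hb2, hb4, c]
    field_simp
    ring
end

section
/- Let α, c be real with 0 < α < 1/√10 and c > 1/4, and define λ_α : ℝ → ℂ by λ_α(k) = (ik − α)·(c − (ik − α)² + (ik − α)⁴). Then Re(λ_α(k)) < 0 for every k ∈ ℝ; moreover k ↦ Re(λ_α(k)) attains its global maximum at k = 0, where Re(λ_α(0)) = −α·(c − α² + α⁴) < 0. -/
open Complex Real

lemma dispersion_re_eq (α c k : ℝ) :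
    ((Complex.I * k - α) *
        (c - (Complex.I * k - α) ^ 2 + (Complex.I * k - α) ^ 4)).re =
      -α * (c - α ^ 2 + α ^ 4) + α * k ^ 2 * (10 * α ^ 2 - 3) - 5 * α * k ^ 4 := by
  simp [Complex.ext_iff, pow_succ, Complex.mul_re, Complex.mul_im]
  ring

/-- For `0 < α < 1/√10` and `c > 1/4`, the dispersion curve
`λ_α(k) = (ik - α)(c - (ik-α)² + (ik-α)⁴)` lies in the open left half-plane:
its real part is negative for all `k`, attains its global maximum at `k = 0`,
where it equals `-α(c - α² + α⁴) < 0`. -/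
theorem dispersion_left_half_plane (α c : ℝ)
    (hα0 : 0 < α) (hα : α < 1 / Real.sqrt 10) (hc : 1 / 4 < c) :
    (∀ k : ℝ,
      ((Complex.I * k - α) *
        (c - (Complex.I * k - α) ^ 2 + (Complex.I * k - α) ^ 4)).re < 0) ∧
    (∀ k : ℝ,
      ((Complex.I * k - α) *
        (c - (Complex.I * k - α) ^ 2 + (Complex.I * k - α) ^ 4)).re ≤
      ((Complex.I * (0 : ℝ) - α) *
        (c - (Complex.I * (0 : ℝ) - α) ^ 2 + (Complex.I * (0 : ℝ) - α) ^ 4)).re) ∧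
    ((Complex.I * (0 : ℝ) - α) *
        (c - (Complex.I * (0 : ℝ) - α) ^ 2 + (Complex.I * (0 : ℝ) - α) ^ 4)).re =
      -α * (c - α ^ 2 + α ^ 4) ∧
    -α * (c - α ^ 2 + α ^ 4) < 0 := by
  have hs : (0:ℝ) < Real.sqrt 10 := Real.sqrt_pos.2 (by norm_num)
  have hα2 : α ^ 2 < 1 / 10 := by
    have h1 : α ^ 2 < (1 / Real.sqrt 10) ^ 2 := by
      apply pow_lt_pow_left₀ hα hα0.le
      exact two_ne_zero
    have h2 : (1 / Real.sqrt 10) ^ 2 = 1 / 10 := by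
      rw [div_pow, one_pow, Real.sq_sqrt (by norm_num : (10:ℝ) ≥ 0)]
    linarith [h1, h2.symm ▸ h1]
  have hmax : -α * (c - α ^ 2 + α ^ 4) < 0 := by
    have : (0:ℝ) < c - α ^ 2 + α ^ 4 := by nlinarith [sq_nonneg (α^2)]
    nlinarith
  refine ⟨fun k => ?_, fun k => ?_, ?_, hmax⟩
  · rw [dispersion_re_eq]
    nlinarith [mul_nonneg hα0.le (sq_nonneg k), mul_nonneg hα0.le (sq_nonneg (k^2))]
  · rw [dispersion_re_eq, dispersion_re_eq]
    nlinarith [mul_nonneg hα0.le (sq_nonneg k), mul_nonneg hα0.le (sq_nonneg (k^2)), sq_nonneg k]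
  · rw [dispersion_re_eq]; ring
end

section
/- Let α, c be real with 0 < α < 1/√10 and c > 1/4, and define λ_α : ℝ → ℂ by λ_α(k) = (ik − α)·(c − (ik − α)² + (ik − α)⁴). Then the map k ↦ Im(λ_α(k)) is strictly increasing on ℝ (its derivative c − 3α² + 5α⁴ + 3k²(1 − 10α²) + 5k⁴ is positive for all k); in particular k ↦ λ_α(k) is injective, so the dispersion curve is a simple (non-self-intersecting) curve. -/
open Complex Real

/-- The dispersion relation `λ_α(k)` of `∂_z H` in the space weighted by `e^{αz}`. -/
noncomputable def dispersion (α c k : ℝ) : ℂ :=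
  (I * k - α) * (c - (I * k - α) ^ 2 + (I * k - α) ^ 4)

theorem dispersion_im (α c k : ℝ) :
    (dispersion α c k).im = (c - 3 * α ^ 2 + 5 * α ^ 4) * k + (1 - 10 * α ^ 2) * k ^ 3 + k ^ 5 := by
  simp only [dispersion, pow_succ, pow_zero, one_mul, mul_im, sub_re, mul_re, I_re, ofReal_re,
    zero_mul, I_im, ofReal_im, mul_zero, sub_self, zero_sub, add_im, sub_im, zero_add, sub_zero,
    neg_mul, mul_neg, neg_add_rev, neg_neg, add_re]
  ring

theorem strictMono_mul_add_mul_pow_three_add_pow_five {a b : ℝ} (ha : 0 ≤ a) (hb : 0 ≤ b) :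
    StrictMono fun k : ℝ => a * k + b * k ^ 3 + k ^ 5 := by
  have hlin : Monotone fun k : ℝ => a * k := fun _ _ h => mul_le_mul_of_nonneg_left h ha
  have hcube : Monotone fun k : ℝ => b * k ^ 3 := fun _ _ h =>
    mul_le_mul_of_nonneg_left ((Odd.strictMono_pow (by decide)).monotone h) hb
  exact (hlin.add hcube).add_strictMono (Odd.strictMono_pow (by decide))

theorem sq_lt_of_lt_inv_sqrt {α x : ℝ} (hα0 : 0 ≤ α) (hα : α < 1 / √x) :
    α ^ 2 < 1 / x := by
  rw [one_div, ← Real.sqrt_inv] at hα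
  exact (Real.lt_sqrt hα0).mp hα |>.trans_eq (one_div x).symm

-- `5t² - 3t + 1/4 = 5(1/10 - t)(1/2 - t)` is positive for `t = α² < 1/10`.
theorem dispersion_linear_coeff_pos {α c : ℝ} (hα : α ^ 2 < 1 / 10) (hc : 1 / 4 < c) :
    0 < c - 3 * α ^ 2 + 5 * α ^ 4 := by
  nlinarith [mul_pos (sub_pos.mpr hα) (by linarith : (0 : ℝ) < 1 / 2 - α ^ 2)]

/-- For `0 < α < 1/√10` and `c > 1/4`, the imaginary part of the dispersion curve
`λ_α(k) = (ik - α)(c - (ik-α)² + (ik-α)⁴)` is strictly increasing in `k`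
(its derivative `c - 3α² + 5α⁴ + 3k²(1-10α²) + 5k⁴` is positive), so `k ↦ λ_α(k)`
is injective: the dispersion curve is a simple curve. -/
theorem dispersion_curve_simple (α c : ℝ)
    (hα0 : 0 < α) (hα : α < 1 / Real.sqrt 10) (hc : 1 / 4 < c) :
    (∀ k : ℝ,
      0 < c - 3 * α ^ 2 + 5 * α ^ 4 + 3 * k ^ 2 * (1 - 10 * α ^ 2) + 5 * k ^ 4) ∧
    StrictMono (fun k : ℝ =>
      ((Complex.I * k - α) *
        (c - (Complex.I * k - α) ^ 2 + (Complex.I * k - α) ^ 4)).im) ∧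
    Function.Injective (fun k : ℝ =>
      (Complex.I * k - α) *
        (c - (Complex.I * k - α) ^ 2 + (Complex.I * k - α) ^ 4)) := by
  have hα2 : α ^ 2 < 1 / 10 := sq_lt_of_lt_inv_sqrt hα0.le hα
  have ha : 0 < c - 3 * α ^ 2 + 5 * α ^ 4 := dispersion_linear_coeff_pos hα2 hc
  have hb : 0 ≤ 1 - 10 * α ^ 2 := by linarith
  have hmono : StrictMono fun k => (dispersion α c k).im := by
    simpa only [dispersion_im] using strictMono_mul_add_mul_pow_three_add_pow_five ha.le hb
  refine ⟨fun k => ?_, hmono, fun k l h => hmono.injective (congrArg Complex.im h)⟩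
  have hk2 := mul_nonneg (mul_nonneg zero_le_three (sq_nonneg k)) hb
  have hk4 : 0 ≤ 5 * k ^ 4 := by positivity
  linarith
end

section
/- Let c ∈ ℝ, φ : ℝ → ℝ continuous, and λ ∈ ℂ with Re(λ) ≠ 0. Let w : ℝ → ℂ be five times continuously differentiable with w, w′, w″, w‴, w⁗ all tending to 0 as |z| → ∞ and with all integrands below integrable, set v := w′, and suppose c·v(z) − v″(z) + v⁗(z) − 2φ(z)·v(z) = λ·w(z) for all z ∈ ℝ. Then ∫ℝ w(z)·conj(v(z)) dz = 0. -/
/-! Write `v = w′` and `I = ∫ w · conj v`. Since `(|w|²)′ = 2 Re (w · conj v)` and `w` decays,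
`Re I = 0`. Multiplying the equation by `conj v`, `λ · w · conj v` is the real function
`(c - 2φ)|v|² + |v′|² + |v″|²` plus the derivative of the decaying boundary form
`v‴ · conj v - v″ · conj v′ - v′ · conj v`, so `Im (λ I) = 0`. Together with `Re I = 0` this says
`Re λ · Im I = 0`, hence `I = 0`. -/

open Filter MeasureTheory Complex ComplexConjugate Topology

theorem integral_eq_zero_of_hasDerivAt_of_tendsto_cocompact {E : Type*} [NormedAddCommGroup E]
    [NormedSpace ℝ E] [CompleteSpace E] {f f' : ℝ → E} (hf : ∀ x, HasDerivAt f (f' x) x)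
    (hf' : Integrable f') (hlim : Tendsto f (cocompact ℝ) (𝓝 0)) : ∫ x, f' x = 0 := by
  rw [cocompact_eq_atBot_atTop] at hlim
  simpa using integral_of_hasDerivAt_of_tendsto hf hf' (hlim.mono_left le_sup_left)
    (hlim.mono_left le_sup_right)

theorem HasDerivAt.mul_conj {f g : ℝ → ℂ} {f' g' : ℂ} {x : ℝ} (hf : HasDerivAt f f' x)
    (hg : HasDerivAt g g' x) :
    HasDerivAt (fun y => f y * conj (g y)) (f' * conj (g x) + f x * conj g') x :=
  hf.mul hg.star

theorem HasDerivAt.complex_re {f : ℝ → ℂ} {f' : ℂ} {x : ℝ} (hf : HasDerivAt f f' x) :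
    HasDerivAt (fun y => (f y).re) f'.re x :=
  reCLM.hasFDerivAt.comp_hasDerivAt x hf

theorem HasDerivAt.complex_im {f : ℝ → ℂ} {f' : ℂ} {x : ℝ} (hf : HasDerivAt f f' x) :
    HasDerivAt (fun y => (f y).im) f'.im x :=
  imCLM.hasFDerivAt.comp_hasDerivAt x hf

theorem Filter.Tendsto.mul_conj {α : Type*} {l : Filter α} {f g : α → ℂ}
    (hf : Tendsto f l (𝓝 0)) (hg : Tendsto g l (𝓝 0)) :
    Tendsto (fun y => f y * conj (g y)) l (𝓝 0) := by
  simpa using hf.mul hg.star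

theorem re_integral_mul_conj_deriv_eq_zero {w : ℝ → ℂ} (hw : Differentiable ℝ w)
    (hlim : Tendsto w (cocompact ℝ) (𝓝 0))
    (hint : Integrable (fun x => w x * conj (deriv w x))) :
    (∫ x, w x * conj (deriv w x)).re = 0 := by
  have hderiv : ∀ x, HasDerivAt (fun y => (w y * conj (w y)).re)
      (2 * (w x * conj (deriv w x)).re) x := fun x => by
    convert ((hw x).hasDerivAt.mul_conj (hw x).hasDerivAt).complex_re using 1
    simp only [add_re, mul_re, conj_re, conj_im]
    ring
  have := integral_eq_zero_of_hasDerivAt_of_tendsto_cocompact hderiv (hint.re.const_mul 2)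
    (by simpa only [Function.comp_def, zero_re] using
      (continuous_re.tendsto 0).comp (hlim.mul_conj hlim))
  rw [integral_const_mul, ← RCLike.re_eq_complex_re, integral_re hint] at this
  simpa using this

noncomputable def boundaryForm (v : ℝ → ℂ) (x : ℝ) : ℂ :=
  iteratedDeriv 3 v x * conj (v x) - iteratedDeriv 2 v x * conj (deriv v x)
    - deriv v x * conj (v x)

theorem hasDerivAt_boundaryForm {v : ℝ → ℂ} (hv : ContDiff ℝ 4 v) (x : ℝ) :
    HasDerivAt (boundaryForm v) ((iteratedDeriv 4 v x - iteratedDeriv 2 v x) * conj (v x)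
      - ‖deriv v x‖ ^ 2 - ‖iteratedDeriv 2 v x‖ ^ 2) x := by
  have hD : ∀ j < 4, HasDerivAt (iteratedDeriv j v) (iteratedDeriv (j + 1) v x) x := by
    intro j hj
    rw [iteratedDeriv_succ]
    exact (hv.differentiable_iteratedDeriv j (by exact_mod_cast hj) x).hasDerivAt
  have h0 : HasDerivAt v (deriv v x) x := (hv.differentiable (by norm_num) x).hasDerivAt
  have h1 : HasDerivAt (deriv v) (iteratedDeriv 2 v x) x := by
    simpa [iteratedDeriv_one] using hD 1 (by norm_num)
  refine ((((hD 3 (by norm_num)).mul_conj h0).sub ((hD 2 (by norm_num)).mul_conj h1)).sub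
    (h1.mul_conj h0)).congr_deriv ?_
  rw [← mul_conj', ← mul_conj']
  ring

theorem tendsto_boundaryForm_cocompact {v : ℝ → ℂ}
    (hlim : ∀ j ≤ 3, Tendsto (iteratedDeriv j v) (cocompact ℝ) (𝓝 0)) :
    Tendsto (boundaryForm v) (cocompact ℝ) (𝓝 0) := by
  have h0 : Tendsto v (cocompact ℝ) (𝓝 0) := by simpa using hlim 0 (by norm_num)
  have h1 : Tendsto (deriv v) (cocompact ℝ) (𝓝 0) := by simpa using hlim 1 (by norm_num)
  have := (((hlim 3 le_rfl).mul_conj h0).sub ((hlim 2 (by norm_num)).mul_conj h1)).sub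
    (h1.mul_conj h0)
  rwa [sub_zero, sub_zero] at this

theorem integral_im_sub_mul_conj_eq_zero {v : ℝ → ℂ} (hv : ContDiff ℝ 4 v)
    (hlim : ∀ j ≤ 3, Tendsto (iteratedDeriv j v) (cocompact ℝ) (𝓝 0))
    (hint : Integrable (fun x => ((iteratedDeriv 4 v x - iteratedDeriv 2 v x) * conj (v x)).im)) :
    ∫ x, ((iteratedDeriv 4 v x - iteratedDeriv 2 v x) * conj (v x)).im = 0 := by
  refine integral_eq_zero_of_hasDerivAt_of_tendsto_cocompact
    (f := fun x => (boundaryForm v x).im) (fun x => ?_) hint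
    (by simpa only [Function.comp_def, zero_im] using
      (continuous_im.tendsto 0).comp (tendsto_boundaryForm_cocompact hlim))
  simpa only [sub_im, ← ofReal_pow, ofReal_im, sub_zero] using
    (hasDerivAt_boundaryForm hv x).complex_im

theorem orthogonality_off_imaginary_axis_general (c : ℝ) (φ : ℝ → ℝ)
    (lam : ℂ) (hlam : lam.re ≠ 0) (w : ℝ → ℂ) (hw : ContDiff ℝ 5 w)
    (hdecay : ∀ j : ℕ, j ≤ 4 → Tendsto (iteratedDeriv j w) (cocompact ℝ) (nhds 0))
    (hint : Integrable (fun z => w z * starRingEnd ℂ (deriv w z)) (volume : Measure ℝ))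
    (heq : ∀ z : ℝ,
      (c : ℂ) * deriv w z - iteratedDeriv 2 (deriv w) z + iteratedDeriv 4 (deriv w) z
        - 2 * (φ z : ℂ) * deriv w z = lam * w z) :
    ∫ z : ℝ, w z * starRingEnd ℂ (deriv w z) = 0 := by
  set I := ∫ z : ℝ, w z * conj (deriv w z)
  have hre : I.re = 0 := re_integral_mul_conj_deriv_eq_zero (hw.differentiable (by norm_num))
    (by simpa using hdecay 0 (by norm_num)) hint
  have hpoint : ∀ z, (lam * (w z * conj (deriv w z))).im =
      ((iteratedDeriv 4 (deriv w) z - iteratedDeriv 2 (deriv w) z) * conj (deriv w z)).im := by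
    intro z
    have hsplit : lam * (w z * conj (deriv w z)) =
        (iteratedDeriv 4 (deriv w) z - iteratedDeriv 2 (deriv w) z) * conj (deriv w z)
          + ((c - 2 * φ z : ℝ) : ℂ) * (deriv w z * conj (deriv w z)) := by
      rw [← mul_assoc, ← heq z]
      push_cast
      ring
    rw [hsplit, add_im, mul_conj', ← ofReal_pow, ← ofReal_mul, ofReal_im, add_zero]
  have hlamI : (lam * I).im = 0 := by
    rw [← integral_const_mul, ← RCLike.im_eq_complex_im, ← integral_im (hint.const_mul lam)]
    simp only [RCLike.im_eq_complex_im, hpoint]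
    refine integral_im_sub_mul_conj_eq_zero hw.deriv' (fun j hj => ?_) ?_
    · rw [← iteratedDeriv_succ']
      exact hdecay (j + 1) (by omega)
    · simpa only [RCLike.im_eq_complex_im, hpoint] using (hint.const_mul lam).im
  have him : I.im = 0 := by
    rw [mul_im, hre, mul_zero, add_zero] at hlamI
    exact (mul_eq_zero.mp hlamI).resolve_left hlam
  exact Complex.ext hre him

/-- Orthogonality forced off the imaginary axis: if `v = w′` satisfies `Hv = λ·w`
with `Re(λ) ≠ 0`, where `w` and its derivatives up to fourth order decay at `±∞`
and all the relevant integrands are integrable, then `∫ w·conj(v) = 0`. -/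
theorem orthogonality_off_imaginary_axis (c : ℝ) (φ : ℝ → ℝ) (hφ : Continuous φ)
    (lam : ℂ) (hlam : lam.re ≠ 0) (w : ℝ → ℂ) (hw : ContDiff ℝ 5 w)
    (hdecay : ∀ j : ℕ, j ≤ 4 → Tendsto (iteratedDeriv j w) (cocompact ℝ) (nhds 0))
    (hint : Integrable (fun z => w z * starRingEnd ℂ (deriv w z)) (volume : Measure ℝ))
    (hi0 : Integrable (fun z => ‖deriv w z‖ ^ 2) (volume : Measure ℝ))
    (hi1 : Integrable (fun z => ‖iteratedDeriv 2 w z‖ ^ 2) (volume : Measure ℝ))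
    (hi2 : Integrable (fun z => ‖iteratedDeriv 3 w z‖ ^ 2) (volume : Measure ℝ))
    (hi3 : Integrable (fun z => φ z * ‖deriv w z‖ ^ 2) (volume : Measure ℝ))
    (heq : ∀ z : ℝ,
      (c : ℂ) * deriv w z - iteratedDeriv 2 (deriv w) z + iteratedDeriv 4 (deriv w) z
        - 2 * (φ z : ℂ) * deriv w z = lam * w z) :
    ∫ z : ℝ, w z * starRingEnd ℂ (deriv w z) = 0 :=
  orthogonality_off_imaginary_axis_general c φ lam hlam w hw hdecay hint heq
end
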